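/- arXiv:2211.13725 — 3 statements merged into one kernel-verified Lean document; each statement's English description precedes it below -/
import Mathlib

section
/- Let X be a convex set in ℝ^n, F_{i,j} ⊆ ℝ^n sets for j = 0,...,M-1, and λ_j ≥ 0 with Σ_j λ_j = 1. If z_j ∈ X ⊖ F_{i,j} for each j, then Σ_j λ_j z_j ∈ ⊕_{j=0}^{M-1} λ_j (X ⊖ F_{i,j}), and moreover if each F_{i,j} is nonempty, ⊕_j λ_j (X ⊖ F_{i,j}) ⊆ X ⊖ (⊕_j λ_j F_{i,j}) when X is convex. -/
open Set Pointwise Finset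

/-- Pontryagin set difference: `A ⊖ B = {x | x + b ∈ A for all b ∈ B}`. -/
def pontDiff {E : Type*} [Add E] (A B : Set E) : Set E := {x | ∀ b ∈ B, x + b ∈ A}

theorem convex_combination_tightened_constraints
    {n M : ℕ} (X : Set (Fin n → ℝ)) (hX : Convex ℝ X)
    (F : Fin M → Set (Fin n → ℝ))
    (lam : Fin M → ℝ) (hlam : ∀ j, 0 ≤ lam j) (hsum : ∑ j, lam j = 1)
    (z : Fin M → (Fin n → ℝ)) (hz : ∀ j, z j ∈ pontDiff X (F j)) :
    (∑ j, lam j • z j) ∈ ∑ j, lam j • pontDiff X (F j)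
      ∧ ((∀ j, (F j).Nonempty) →
          (∑ j, lam j • pontDiff X (F j)) ⊆ pontDiff X (∑ j, lam j • F j)) := by
  constructor
  · exact Set.finset_sum_mem_finset_sum Finset.univ _ _
      (fun j _ => Set.smul_mem_smul_set (hz j))
  · intro _ x hx b hb
    rw [Set.mem_fintype_sum] at hx hb
    obtain ⟨g, hg, rfl⟩ := hx
    obtain ⟨c, hc, rfl⟩ := hb
    choose y hy hyg using fun j => hg j
    choose d hd hdc using fun j => hc j
    have : (∑ j, g j) + ∑ j, c j = ∑ j, lam j • (y j + d j) := by
      rw [← Finset.sum_add_distrib]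
      refine Finset.sum_congr rfl fun j _ => ?_
      rw [← hyg j, ← hdc j, smul_add]
    rw [this]
    exact hX.sum_mem (fun j _ => hlam j) hsum (fun j _ => hy j (d j) (hd j))
end

section
/- Let Φ_x^1, ..., Φ_x^N ∈ ℝ^{n×n} and Φ_u^1, ..., Φ_u^N ∈ ℝ^{m×n} satisfy Φ_x^1 = I and Φ_x^{i+1} = A Φ_x^i + B Φ_u^i for i = 1,...,N-1. Define the block-lower-triangular Toeplitz matrices 𝚽_x and 𝚽_u with (i,j)-blocks Φ_x^{i-j+1} and Φ_u^{i-j+1} for i ≥ j (zero otherwise). Then [I - ZA, -ZB] [𝚽_x; 𝚽_u] = I, where ZA and ZB are block-lower-shift matrices with A and B on the first subdiagonal, respectively. -/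
open Matrix

/-- Block-lower-shift matrix: the `(i+1,i)` block equals `A`, all other blocks are zero. -/
def blockShift {N n m : ℕ} (A : Matrix (Fin n) (Fin m) ℝ) :
    Matrix (Fin N × Fin n) (Fin N × Fin m) ℝ :=
  fun p q => if p.1.val = q.1.val + 1 then A p.2 q.2 else 0

/-- Block-lower-triangular Toeplitz matrix with `(i,j)`-block `Φ (i-j+1)` for `j ≤ i`. -/
def blockToeplitz {N n m : ℕ} (Φ : ℕ → Matrix (Fin n) (Fin m) ℝ) :
    Matrix (Fin N × Fin n) (Fin N × Fin m) ℝ :=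
  fun p q => if q.1.val ≤ p.1.val then Φ (p.1.val - q.1.val + 1) p.2 q.2 else 0

/-!
Block-lower-triangular Toeplitz matrices form a module indexed by their symbol `Φ`, of which
only `Φ 1, …, Φ N` matter; the identity is the one with symbol `Pi.single 1 1`, and left
multiplication by a block shift delays the symbol by one step. Hence the left-hand side is
the Toeplitz matrix of the symbol `k ↦ Φx k - A Φx (k-1) - B Φu (k-1)` (with the delayed terms
absent at `k = 1`), which the recursion turns into `Pi.single 1 1` on `1, …, N`.
-/

section BlockToeplitz

variable {N n m l : ℕ}

theorem blockToeplitz_sub (Φ Ψ : ℕ → Matrix (Fin n) (Fin m) ℝ) :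
    blockToeplitz (N := N) (Φ - Ψ) = blockToeplitz Φ - blockToeplitz Ψ := by
  ext p q
  simp only [blockToeplitz, Pi.sub_apply, Matrix.sub_apply]
  split_ifs <;> simp

theorem blockToeplitz_congr {Φ Ψ : ℕ → Matrix (Fin n) (Fin m) ℝ}
    (h : ∀ k, 1 ≤ k → k ≤ N → Φ k = Ψ k) :
    blockToeplitz (N := N) Φ = blockToeplitz Ψ := by
  ext p q
  simp only [blockToeplitz]
  split_ifs
  · rw [h _ (by omega) (by omega)]
  · rfl

theorem blockToeplitz_single_one :
    blockToeplitz (N := N) (Pi.single 1 (1 : Matrix (Fin n) (Fin n) ℝ)) = 1 := by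
  ext ⟨i, p⟩ ⟨j, q⟩
  simp only [blockToeplitz, Matrix.one_apply, Prod.mk.injEq]
  by_cases hij : i = j
  · subst hij
    simp [Matrix.one_apply]
  · have hij' : i.val ≠ j.val := Fin.val_ne_of_ne hij
    rw [if_neg (show ¬(i = j ∧ p = q) from fun h => hij h.1)]
    split_ifs
    · rw [Pi.single_eq_of_ne (by omega), Matrix.zero_apply]
    · rfl

theorem blockShift_mul_blockToeplitz (A : Matrix (Fin n) (Fin m) ℝ)
    (Φ : ℕ → Matrix (Fin m) (Fin l) ℝ) :
    blockShift (N := N) A * blockToeplitz (N := N) Φ =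
      blockToeplitz fun k => if 2 ≤ k then A * Φ (k - 1) else 0 := by
  ext ⟨i, p⟩ ⟨j, q⟩
  rw [Matrix.mul_apply, Fintype.sum_prod_type]
  simp only [blockShift, blockToeplitz]
  rcases Nat.eq_zero_or_pos i.val with hi | hi
  · simp [hi]
  · let k : Fin N := ⟨i.val - 1, by omega⟩
    rw [Finset.sum_eq_single k]
    · have hk : (k : ℕ) = i.val - 1 := rfl
      simp only [hk, if_pos (show i.val = i.val - 1 + 1 by omega)]
      by_cases hji : j.val < i.val
      · rw [if_pos hji.le, if_pos (by omega), Matrix.mul_apply]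
        refine Finset.sum_congr rfl fun r _ => ?_
        rw [if_pos (by omega), show i.val - 1 - j.val + 1 = i.val - j.val + 1 - 1 by omega]
      · simp only [if_neg (show ¬ j.val ≤ i.val - 1 by omega), mul_zero, Finset.sum_const_zero]
        split_ifs <;> first | rfl | omega
    · intro k' _ hk'
      refine Finset.sum_eq_zero fun r _ => ?_
      rw [if_neg, zero_mul]
      exact fun h => hk' (Fin.ext (by simp [k]; omega))
    · simp

end BlockToeplitz

theorem slp_recursion_iff_affine_constraint
    {N n m : ℕ} (A : Matrix (Fin n) (Fin n) ℝ) (B : Matrix (Fin n) (Fin m) ℝ)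
    (Φx : ℕ → Matrix (Fin n) (Fin n) ℝ) (Φu : ℕ → Matrix (Fin m) (Fin n) ℝ)
    (hΦ1 : Φx 1 = 1)
    (hrec : ∀ i, 1 ≤ i → i ≤ N - 1 → Φx (i + 1) = A * Φx i + B * Φu i) :
    (1 - blockShift (N := N) A) * blockToeplitz Φx
      - blockShift (N := N) B * blockToeplitz Φu = 1 := by
  rw [Matrix.sub_mul, Matrix.one_mul, blockShift_mul_blockToeplitz]
  -- the statement elaborates this product with `CStarMatrix`'s (defeq) multiplication instance
  erw [blockShift_mul_blockToeplitz]
  rw [← blockToeplitz_sub, ← blockToeplitz_sub, ← blockToeplitz_single_one]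
  refine blockToeplitz_congr fun k hk1 hkN => ?_
  obtain rfl | ⟨i, rfl, hi⟩ : k = 1 ∨ ∃ i, k = i + 1 ∧ 1 ≤ i := by
    rcases k with _ | _ | i <;> simp_all
  · simp [hΦ1]
  · simp only [Pi.sub_apply, if_pos (show 2 ≤ i + 1 by omega), Nat.add_sub_cancel,
      hrec i hi (by omega), Pi.single_eq_of_ne (show i + 1 ≠ 1 by omega)]
    abel
end

section
/- If Γ = 0 and X_f ⊆ ℝ^n is a nonempty convex set with 0 ∈ X_f satisfying (A+BK_f)X_f ⊆ X_f, and X ⊆ ℝ^n, U ⊆ ℝ^m are sets with 0 in their interiors, and F_N^x ⊆ ℝ^n, F_N^u ⊆ ℝ^m are compact sets with X ⊖ F_N^x and U ⊖ F_N^u having 0 in their interiors, then there exists α > 0 such that αX_f ⊆ X ⊖ F_N^x, αK_f X_f ⊆ U ⊖ F_N^u, and α(A+BK_f)X_f ⊆ αX_f. -/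
open Matrix Set Pointwise

theorem exists_scaled_terminal_set
    {n m : ℕ} (Xf X FNx : Set (Fin n → ℝ)) (U FNu : Set (Fin m → ℝ))
    (A : Matrix (Fin n) (Fin n) ℝ) (B : Matrix (Fin n) (Fin m) ℝ)
    (Kf : Matrix (Fin m) (Fin n) ℝ) (Γ : Matrix (Fin n) (Fin n) ℝ)
    (hΓ : Γ = 0)
    (hXfne : Xf.Nonempty) (hXfconv : Convex ℝ Xf) (hXf0 : (0 : Fin n → ℝ) ∈ Xf)
    (hXfbdd : Bornology.IsBounded Xf)
    (hXfinv : ∀ x ∈ Xf, (A + B * Kf).mulVec x ∈ Xf)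
    (hX0 : (0 : Fin n → ℝ) ∈ interior X) (hU0 : (0 : Fin m → ℝ) ∈ interior U)
    (hFNx : IsCompact FNx) (hFNu : IsCompact FNu)
    (hXt0 : (0 : Fin n → ℝ) ∈ interior (pontDiff X FNx))
    (hUt0 : (0 : Fin m → ℝ) ∈ interior (pontDiff U FNu)) :
    ∃ α : ℝ, 0 < α ∧
      α • Xf ⊆ pontDiff X FNx ∧
      α • (Kf.mulVec '' Xf) ⊆ pontDiff U FNu ∧
      α • ((A + B * Kf).mulVec '' Xf) ⊆ α • Xf := by
  rw [mem_interior_iff_mem_nhds, Metric.mem_nhds_iff] at hXt0 hUt0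
  obtain ⟨ε₁, hε₁, hball₁⟩ := hXt0
  obtain ⟨ε₂, hε₂, hball₂⟩ := hUt0
  obtain ⟨R, hR⟩ := isBounded_iff_forall_norm_le.mp hXfbdd
  obtain ⟨C, hC0, hCb⟩ : ∃ C : ℝ, 0 ≤ C ∧ ∀ x, ‖Kf.mulVec x‖ ≤ C * ‖x‖ := by
    refine ⟨‖LinearMap.toContinuousLinearMap (Matrix.mulVecLin Kf)‖, norm_nonneg _, fun x => ?_⟩
    have h := (LinearMap.toContinuousLinearMap (Matrix.mulVecLin Kf)).le_opNorm x
    simpa [LinearMap.coe_toContinuousLinearMap', Matrix.mulVecLin_apply] using h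
  set R₀ : ℝ := max R 0 with hR₀
  have hR₀nn : 0 ≤ R₀ := le_max_right _ _
  set M : ℝ := max R₀ (C * R₀) with hM
  have hMnn : 0 ≤ M := le_trans hR₀nn (le_max_left _ _)
  set α : ℝ := min ε₁ ε₂ / (2 * (M + 1)) with hα
  have hαpos : 0 < α := div_pos (lt_min hε₁ hε₂) (by linarith)
  have hnorm : ∀ x ∈ Xf, ‖x‖ ≤ R₀ := fun x hx => le_trans (hR x hx) (le_max_left _ _)
  have key : α * (M + 1) < min ε₁ ε₂ := by
    have h2 : (0:ℝ) < 2 * (M + 1) := by linarith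
    rw [hα, div_mul_eq_mul_div, div_lt_iff₀ h2]
    nlinarith [mul_pos (lt_min hε₁ hε₂) (show (0:ℝ) < M + 1 by linarith)]
  refine ⟨α, hαpos, ?_, ?_, ?_⟩
  · rintro y ⟨x, hx, rfl⟩
    apply hball₁
    rw [Metric.mem_ball, dist_zero_right, norm_smul, Real.norm_eq_abs,
      abs_of_pos hαpos]
    calc α * ‖x‖ ≤ α * (M + 1) := by
          have := hnorm x hx
          have hMle : R₀ ≤ M + 1 := le_trans (le_max_left _ _) (by linarith)
          nlinarith
      _ < min ε₁ ε₂ := key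
      _ ≤ ε₁ := min_le_left _ _
  · rintro y ⟨u, ⟨x, hx, rfl⟩, rfl⟩
    apply hball₂
    rw [Metric.mem_ball, dist_zero_right, norm_smul, Real.norm_eq_abs,
      abs_of_pos hαpos]
    have hfx : ‖Kf.mulVec x‖ ≤ C * R₀ := by
      calc ‖Kf.mulVec x‖ ≤ C * ‖x‖ := hCb x
        _ ≤ C * R₀ := by
            have := hnorm x hx
            nlinarith
    calc α * ‖Kf.mulVec x‖ ≤ α * (M + 1) := by
          have hMle : C * R₀ ≤ M + 1 := le_trans (le_max_right _ _) (by linarith)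
          nlinarith
      _ < min ε₁ ε₂ := key
      _ ≤ ε₂ := min_le_right _ _
  · apply smul_set_mono
    rintro y ⟨x, hx, rfl⟩
    exact hXfinv x hx
end
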